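/- arXiv:2508.21335 — 4 statements merged into one kernel-verified Lean document; each statement's English description precedes it below -/
import Mathlib

section
/- If for each 0 ≤ r ≤ n−2 and every integer k̂ ≥ k the coefficients β_0,…,β_{k−1} satisfy Σ_{j=0}^{k−1} β_j (k̂−j−1)_r = (k̂)_r (falling factorials), then for every integer 1 ≤ n̂ ≤ n−1 and all integers t ≥ k, Σ_{j=0}^{k−1} β_j ((t−j)^{n̂} − (t−j−1)^{n̂}) = (t+1)^{n̂} − t^{n̂}. -/
open Polynomial Finset

private lemma natDegree_descPoch (m : ℕ) : (descPochhammer ℝ m).natDegree = m := by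
  induction m with
  | zero => simp [descPochhammer_zero]
  | succ m ih =>
    have h2 : ((X : ℝ[X]) - (m : ℝ[X])).natDegree = 1 := by
      rw [← Polynomial.C_eq_natCast]; exact natDegree_X_sub_C _
    have hne : ((X : ℝ[X]) - (m : ℝ[X])) ≠ 0 := by
      intro h0
      have := congrArg Polynomial.natDegree h0
      rw [h2, natDegree_zero] at this
      exact one_ne_zero this
    rw [descPochhammer_succ_right, natDegree_mul ((monic_descPochhammer ℝ m).ne_zero) hne,
      ih, h2]

/-- Every real polynomial of degree `< d` is a linear combination of the
descending Pochhammer polynomials of degrees `< d`. -/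
private lemma span_descPoch (d : ℕ) :
    ∀ p : ℝ[X], p.degree < d →
      ∃ c : ℕ → ℝ, p = ∑ r ∈ range d, Polynomial.C (c r) * descPochhammer ℝ r := by
  induction d with
  | zero =>
    intro p hp
    refine ⟨0, ?_⟩
    have : p.degree = ⊥ := by
      by_contra hb
      obtain ⟨m, hm⟩ := WithBot.ne_bot_iff_exists.mp hb
      rw [← hm] at hp
      simpa using hp
    simp [Polynomial.degree_eq_bot.mp this]
  | succ d ih =>
    intro p hp
    by_cases h : p.degree < d
    · obtain ⟨c, hc⟩ := ih p h
      refine ⟨fun r => if r = d then 0 else c r, ?_⟩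
      rw [Finset.sum_range_succ]
      dsimp only
      rw [if_pos rfl, map_zero, zero_mul, add_zero, hc]
      exact Finset.sum_congr rfl fun r hr => by
        rw [if_neg (Finset.mem_range.mp hr).ne]
    · have hp0 : p ≠ 0 := fun h0 => h (by rw [h0, degree_zero]; exact WithBot.bot_lt_coe d)
      have hnd : p.natDegree = d := by
        have e := Polynomial.degree_eq_natDegree hp0
        rw [e, Nat.cast_lt] at hp h
        omega
      have hdeg : p.degree = (d : WithBot ℕ) := by
        rw [Polynomial.degree_eq_natDegree hp0, hnd]
      have hlcne : p.leadingCoeff ≠ 0 := by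
        simpa [Polynomial.leadingCoeff_eq_zero] using hp0
      set q := p - Polynomial.C p.leadingCoeff * descPochhammer ℝ d with hq
      have hmon : (Polynomial.C p.leadingCoeff * descPochhammer ℝ d).degree = (d : WithBot ℕ) := by
        rw [degree_C_mul hlcne, Polynomial.degree_eq_natDegree (monic_descPochhammer ℝ d).ne_zero,
          natDegree_descPoch]
      have hlead : (Polynomial.C p.leadingCoeff * descPochhammer ℝ d).leadingCoeff
          = p.leadingCoeff := by
        rw [leadingCoeff_mul, leadingCoeff_C, (monic_descPochhammer ℝ d).leadingCoeff, mul_one]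
      have hqd : q.degree < d := by
        have := Polynomial.degree_sub_lt (by rw [hdeg, hmon]) hp0 hlead.symm
        rwa [hdeg] at this
      obtain ⟨c, hc⟩ := ih q hqd
      refine ⟨fun r => if r = d then p.leadingCoeff else c r, ?_⟩
      rw [Finset.sum_range_succ]
      dsimp only
      rw [if_pos rfl]
      have hpq : p = q + Polynomial.C p.leadingCoeff * descPochhammer ℝ d := by
        rw [hq]; ring
      conv_lhs => rw [hpq, hc]
      congr 1
      exact Finset.sum_congr rfl fun r hr => by
        rw [if_neg (Finset.mem_range.mp hr).ne]

/-- If the coefficients `β_0, …, β_{k−1}` satisfy the falling-factorial condition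
`∑_{j=0}^{k−1} β_j (k̂−j−1)_r = (k̂)_r` for all `0 ≤ r ≤ n−2` and all integers `k̂ ≥ k`,
then for every `1 ≤ n̂ ≤ n−1` and all integers `t ≥ k`,
`∑_{j=0}^{k−1} β_j ((t−j)^n̂ − (t−j−1)^n̂) = (t+1)^n̂ − t^n̂`. -/
theorem stmt_1 (k n : ℕ) (hk : 0 < k) (hn : 2 ≤ n) (β : ℕ → ℝ)
    (hβ : ∀ r ≤ n - 2, ∀ khat ≥ k,
      ∑ j ∈ Finset.range k, β j * ((khat - j - 1).descFactorial r : ℝ) =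
        (khat.descFactorial r : ℝ)) :
    ∀ nhat, 1 ≤ nhat → nhat ≤ n - 1 → ∀ t ≥ k,
      ∑ j ∈ Finset.range k, β j * (((t - j : ℕ) : ℝ) ^ nhat - ((t - j - 1 : ℕ) : ℝ) ^ nhat) =
        ((t : ℝ) + 1) ^ nhat - (t : ℝ) ^ nhat := by
  intro nhat h1 h2 t ht
  set p : ℝ[X] := X ^ nhat - (X - 1) ^ nhat with hp
  have hmonX : ((X : ℝ[X]) ^ nhat).Monic := monic_X_pow nhat
  have hmonXm1 : (((X : ℝ[X]) - 1) ^ nhat).Monic := by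
    simpa using (monic_X_sub_C (1 : ℝ)).pow nhat
  have hd1 : ((X : ℝ[X]) ^ nhat).degree = (nhat : WithBot ℕ) := degree_X_pow nhat
  have hd2 : (((X : ℝ[X]) - 1) ^ nhat).degree = (nhat : WithBot ℕ) := by
    rw [Polynomial.degree_eq_natDegree hmonXm1.ne_zero, natDegree_pow]
    have h3 : ((X : ℝ[X]) - 1).natDegree = 1 := by
      simpa using natDegree_X_sub_C (1 : ℝ)
    rw [h3, mul_one]
  have hdegp : p.degree < nhat := by
    have := Polynomial.degree_sub_lt (hd1.trans hd2.symm) hmonX.ne_zero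
      (hmonX.leadingCoeff.trans hmonXm1.leadingCoeff.symm)
    rwa [hd1] at this
  obtain ⟨c, hc⟩ := span_descPoch nhat p hdegp
  have hev : ∀ x : ℝ, p.eval x = x ^ nhat - (x - 1) ^ nhat := by
    intro x; simp [hp]
  have hev' : ∀ m : ℕ, p.eval (m : ℝ) =
      ∑ r ∈ range nhat, c r * (m.descFactorial r : ℝ) := by
    intro m
    rw [hc]
    simp only [eval_finset_sum, eval_mul, eval_C]
    exact Finset.sum_congr rfl fun r _ => by
      rw [descPochhammer_eval_eq_descFactorial]
  have hcast : ∀ j ∈ range k, ((t - j - 1 : ℕ) : ℝ) = ((t - j : ℕ) : ℝ) - 1 := by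
    intro j hj
    have hj' := Finset.mem_range.mp hj
    rw [Nat.cast_sub (show 1 ≤ t - j by omega), Nat.cast_one]
  calc ∑ j ∈ range k, β j * (((t - j : ℕ) : ℝ) ^ nhat - ((t - j - 1 : ℕ) : ℝ) ^ nhat)
      = ∑ j ∈ range k, β j * ∑ r ∈ range nhat, c r * ((t - j).descFactorial r : ℝ) := by
        refine Finset.sum_congr rfl fun j hj => ?_
        rw [hcast j hj, ← hev, hev']
    _ = ∑ r ∈ range nhat, c r * ∑ j ∈ range k, β j * ((t - j).descFactorial r : ℝ) := by
        simp only [Finset.mul_sum]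
        rw [Finset.sum_comm]
        exact Finset.sum_congr rfl fun r _ => Finset.sum_congr rfl fun j _ => by ring
    _ = ∑ r ∈ range nhat, c r * ((t + 1).descFactorial r : ℝ) := by
        refine Finset.sum_congr rfl fun r hr => ?_
        have hr' := Finset.mem_range.mp hr
        have hrle : r ≤ n - 2 := by omega
        have hb := hβ r hrle (t + 1) (by omega)
        rw [← hb]
        congr 1
        exact Finset.sum_congr rfl fun j hj => by
          have hjk := Finset.mem_range.mp hj
          have heq : t + 1 - j - 1 = t - j := by omega
          rw [heq]
    _ = p.eval ((t + 1 : ℕ) : ℝ) := (hev' (t + 1)).symm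
    _ = ((t : ℝ) + 1) ^ nhat - (t : ℝ) ^ nhat := by
        rw [hev]; push_cast; ring
end

section
/- Let 0 < ρ < 1 and w ∈ (0,1), and consider the (n+1)×(n+1) limit Pick matrix M with upper-left n×n block P having all entries 1/(1−ρ²), border column Q of ones, and lower-right scalar R = 1 − w². A necessary condition obtained from the perturbed problem is: if for all sufficiently small ε_i > 0 the Pick matrix with P_{ij} = 1/(1 − ρ²/((1+ε_i)(1+ε_j))) is positive semidefinite, then ρ^n ≥ w. -/
/-!
Fix distinct perturbations `ε_i` and put `q_i = ρ / (1 + ε_i)`, so that `P_{ij} = 1 / (1 - q_i q_j)`.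
The rational function `1 - ∏ₖ (z - q_k) / (z - q_k⁻¹)` vanishes at infinity and has simple poles at
the `q_k⁻¹`, so it is a combination `∑ⱼ c_j / (1 - q_j z)`. Evaluating at `z = q_i` gives `P c = 𝟙`,
and at `z = 0` gives `∑ c_j = 1 - ∏ q_k²`. Testing positivity of the Pick matrix on `(c, -1)` yields
`1 - w² ≥ 1 - ∏ q_k²`, hence `w ≤ ∏ q_k ≤ ρⁿ`.
-/

open Finset Polynomial Lagrange

theorem Lagrange.eval_div_eval_nodal_eq_sum {F ι : Type*} [Field F] [DecidableEq ι] {s : Finset ι}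
    {v : ι → F} {f : F[X]} {x : F} (hvs : Set.InjOn v s) (hf : f.degree < #s)
    (hx : ∀ i ∈ s, x ≠ v i) :
    f.eval x / (nodal s v).eval x = ∑ i ∈ s, nodalWeight s v i * f.eval (v i) / (x - v i) := by
  rw [eq_interpolate hvs hf, eval_interpolate_not_at_node _ hx,
    mul_div_cancel_left₀ _ (eval_nodal_not_at_node hx), ← eq_interpolate hvs hf]
  exact sum_congr rfl fun i _ => by ring

theorem Lagrange.degree_nodal_sub_nodal_lt {F ι : Type*} [Field F] (s : Finset ι) (u v : ι → F) :
    (nodal s u - nodal s v).degree < #s := by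
  have h := degree_sub_lt_left (p := nodal s u) (q := nodal s v)
    (by rw [degree_nodal, degree_nodal]) nodal_ne_zero
    (by rw [nodal_monic.leadingCoeff, nodal_monic.leadingCoeff])
  rwa [degree_nodal] at h

theorem exists_sum_div_one_sub_mul_eq {F ι : Type*} [Field F] [Fintype ι] [DecidableEq ι]
    {q : ι → F} (hq : Function.Injective q) (hq0 : ∀ i, q i ≠ 0) :
    ∃ c : ι → F, ∀ z, (∀ k, q k * z ≠ 1) →
      ∑ j, c j / (1 - q j * z) = 1 - ∏ k, (z - q k) / (z - (q k)⁻¹) := by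
  set v : ι → F := fun i => (q i)⁻¹
  have hv : Set.InjOn v (univ : Finset ι) := (inv_injective.comp hq).injOn
  set f := nodal univ v - nodal univ q
  refine ⟨fun j => -q j * (nodalWeight univ v j * f.eval (v j)), fun z hz => ?_⟩
  have hzv : ∀ k ∈ univ, z ≠ v k := fun k _ h => hz k (by simp [h, v, hq0 k])
  have hpf := eval_div_eval_nodal_eq_sum hv (degree_nodal_sub_nodal_lt univ v q) hzv
  rw [eval_sub, sub_div, div_self (eval_nodal_not_at_node hzv), eval_nodal, eval_nodal,
    ← prod_div_distrib] at hpf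
  refine (sum_congr rfl fun j _ => ?_).trans hpf.symm
  have hfactor : 1 - q j * z = -q j * (z - v j) := by
    linear_combination -mul_inv_cancel₀ (hq0 j)
  dsimp only
  rw [hfactor, mul_div_mul_left _ _ (neg_ne_zero.2 (hq0 j))]

theorem exists_sum_div_one_sub_mul_eq_one {F ι : Type*} [Field F] [Fintype ι] [DecidableEq ι]
    {q : ι → F} (hq : Function.Injective q) (hq0 : ∀ i, q i ≠ 0) (hq1 : ∀ i j, q i * q j ≠ 1) :
    ∃ c : ι → F, (∀ i, ∑ j, c j / (1 - q i * q j) = 1) ∧ ∑ j, c j = 1 - (∏ k, q k) ^ 2 := by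
  obtain ⟨c, hc⟩ := exists_sum_div_one_sub_mul_eq hq hq0
  refine ⟨c, fun i => ?_, ?_⟩
  · have h := hc (q i) fun k => hq1 k i
    rw [prod_eq_zero (mem_univ i) (by rw [sub_self, zero_div]), sub_zero] at h
    simpa only [mul_comm (q i)] using h
  · simpa [neg_div_neg_eq, div_inv_eq_mul, ← sq, prod_pow] using hc 0 (by simp)

theorem Matrix.PosSemidef.sum_mul_le_of_sum_mul_eq {n : ℕ}
    {M : Matrix (Fin (n + 1)) (Fin (n + 1)) ℝ} (hM : M.PosSemidef) {c : Fin n → ℝ}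
    (hc : ∀ i : Fin n, ∑ j, M i.castSucc j.castSucc * c j = M i.castSucc (Fin.last n)) :
    ∑ j, M (Fin.last n) j.castSucc * c j ≤ M (Fin.last n) (Fin.last n) := by
  have h := hM.dotProduct_mulVec_nonneg (Fin.snoc c (-1) : Fin (n + 1) → ℝ)
  simp only [star_trivial, dotProduct, mulVec, Fin.sum_univ_castSucc, Fin.snoc_castSucc,
    Fin.snoc_last, mul_neg_one, ← sub_eq_add_neg, hc, sub_self, mul_zero, sum_const_zero] at h
  linarith

theorem exists_injective_forall_pos_lt (n : ℕ) {δ : ℝ} (hδ : 0 < δ) :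
    ∃ ε : Fin n → ℝ, Function.Injective ε ∧ ∀ i, 0 < ε i ∧ ε i < δ := by
  refine ⟨fun i => δ / (i + 2), fun a b h => ?_, fun i =>
    ⟨by positivity, div_lt_self hδ (by linarith [(i : ℕ).cast_nonneg (α := ℝ)])⟩⟩
  simp only [div_eq_mul_inv] at h
  exact Fin.ext (by exact_mod_cast add_right_cancel (inv_inj.mp (mul_left_cancel₀ hδ.ne' h)))

theorem stmt_9_general (n : ℕ) (ρ w : ℝ) (hρ0 : 0 < ρ) (hρ1 : ρ < 1)
    (hpsd : ∃ δ > 0, ∀ ε : Fin n → ℝ, (∀ i, 0 < ε i ∧ ε i < δ) →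
      (Matrix.of (fun i j : Fin (n + 1) =>
        if hi : (i : ℕ) < n then
          if hj : (j : ℕ) < n then
            1 / (1 - ρ ^ 2 / ((1 + ε ⟨i, hi⟩) * (1 + ε ⟨j, hj⟩)))
          else 1
        else
          if (j : ℕ) < n then 1 else 1 - w ^ 2)).PosSemidef) :
    w ≤ ρ ^ n := by
  obtain ⟨δ, hδ, hpsd⟩ := hpsd
  obtain ⟨ε, hε_inj, hε⟩ := exists_injective_forall_pos_lt n hδ
  set q : Fin n → ℝ := fun i => ρ / (1 + ε i)
  have hq_pos : ∀ i, 0 < q i := fun i => div_pos hρ0 (by linarith [(hε i).1])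
  have hq_le : ∀ i, q i ≤ ρ := fun i => div_le_self hρ0.le (by linarith [(hε i).1])
  have hq_inj : Function.Injective q := fun a b h => by
    simp only [q, div_eq_mul_inv] at h
    exact hε_inj (add_left_cancel (inv_inj.mp (mul_left_cancel₀ hρ0.ne' h)))
  obtain ⟨c, hc, hc_sum⟩ := exists_sum_div_one_sub_mul_eq_one hq_inj (fun i => (hq_pos i).ne')
    fun i j => (mul_lt_one_of_nonneg_of_lt_one_left (hq_pos i).le
      ((hq_le i).trans_lt hρ1) ((hq_le j).trans hρ1.le)).ne
  have hqq : ∀ i j, ρ ^ 2 / ((1 + ε i) * (1 + ε j)) = q i * q j := fun i j => by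
    rw [div_mul_div_comm, sq]
  have hle := (hpsd ε hε).sum_mul_le_of_sum_mul_eq (c := c) fun i => by
    simpa only [Matrix.of_apply, Fin.val_castSucc, Fin.is_lt, dite_true, Fin.eta, Fin.val_last,
      lt_irrefl, dite_false, one_div_mul_eq_div, hqq] using hc i
  simp only [Matrix.of_apply, Fin.val_castSucc, Fin.is_lt, dite_true, Fin.val_last, lt_irrefl,
    dite_false, ↓reduceIte, one_mul, hc_sum] at hle
  calc w ≤ ∏ k, q k := le_of_sq_le_sq (by linarith) (prod_nonneg fun i _ => (hq_pos i).le)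
    _ ≤ ∏ _k : Fin n, ρ := prod_le_prod (fun i _ => (hq_pos i).le) fun i _ => hq_le i
    _ = ρ ^ n := by rw [prod_const, card_univ, Fintype.card_fin]

/-- Necessary condition from the perturbed Nevanlinna–Pick problem: if for all
sufficiently small `ε_i > 0` the Pick matrix
`M = [[P, Q],[Qᵀ, R]]` with `P_{ij} = 1/(1 − ρ²/((1+ε_i)(1+ε_j)))`, `Q = (1,…,1)ᵀ`
and `R = 1 − w²` is positive semidefinite, then `ρ^n ≥ w`. -/
theorem stmt_9 (n : ℕ) (hn : 1 ≤ n) (ρ w : ℝ) (hρ0 : 0 < ρ) (hρ1 : ρ < 1)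
    (hw0 : 0 < w) (hw1 : w < 1)
    (hpsd : ∃ δ > 0, ∀ ε : Fin n → ℝ, (∀ i, 0 < ε i ∧ ε i < δ) →
      (Matrix.of (fun i j : Fin (n + 1) =>
        if hi : (i : ℕ) < n then
          if hj : (j : ℕ) < n then
            1 / (1 - ρ ^ 2 / ((1 + ε ⟨i, hi⟩) * (1 + ε ⟨j, hj⟩)))
          else 1
        else
          if (j : ℕ) < n then 1 else 1 - w ^ 2)).PosSemidef) :
    w ≤ ρ ^ n :=
  stmt_9_general n ρ w hρ0 hρ1 hpsd
end

section
/- Let n ≥ 1, 0 < ρ < 1, distinct ε_1,…,ε_n > 0, and 0 < w < 1. Define the n×n matrix U by U_{ij} = (−w²(1+ε_i) + ρ²/(1+ε_j)) / ((1+ε_i) − ρ²/(1+ε_j)). Then det U = (−1+w²)^{n−1} · U₁ · U₂ / Π_{i,j}((1+ε_i) − ρ²/(1+ε_j)), where U₁ = (−1)^{n+1} Π_j (ρ²/(1+ε_j)) + (−1)^n w² Π_i (1+ε_i) and U₂ = Π_{i<j} ρ²(ε_i−ε_j)² / ((1+ε_i)(1+ε_j)). -/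
/-!
Write `a i = 1 + ε i`, `b j = ρ² / (1 + ε j)`, `c = -w²`, so that the entries are
`(c a_i + b_j) / (a_i - b_j) = (1 + c) b_j / (a_i - b_j) + c`. The matrix is therefore `1 + c` times
the perturbation `B + (c / (1 + c)) J` of `B = (b_j / (a_i - b_j))` by the all-ones matrix `J`.
By the matrix determinant lemma `det (B + t J)` is affine in `t`; at `t = 0` it equals
`∏ b_j · det C` and at `t = 1` it equals `∏ a_i · det C`, because `B + J = (a_i / (a_i - b_j))`,
where `C = ((a_i - b_j)⁻¹)` is the Cauchy matrix. Cauchy's determinant is evaluated by induction,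
pivoting on the corner entry: the Schur complement of a Cauchy matrix is again a Cauchy matrix,
rescaled along rows and columns.
-/

open Finset Matrix

namespace Matrix

theorem det_add_smul_vecMulVec {R m : Type*} [CommRing R] [Fintype m] [DecidableEq m]
    {A : Matrix m m R} (hA : IsUnit A.det) (u v : m → R) (t : R) :
    (A + t • vecMulVec u v).det = (1 - t) * A.det + t * (A + vecMulVec u v).det := by
  rw [← smul_vecMulVec, vecMulVec_eq Unit, vecMulVec_eq Unit,
    det_add_replicateCol_mul_replicateRow hA, det_add_replicateCol_mul_replicateRow hA,
    replicateCol_smul, Matrix.mul_smul]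
  simp only [det_unique (n := Unit), add_apply, smul_apply, one_apply_eq, smul_eq_mul]
  ring

variable {K : Type*} [Field K]

theorem det_succ_eq_mul_det_schur {n : ℕ} (M : Matrix (Fin (n + 1)) (Fin (n + 1)) K)
    (h : M 0 0 ≠ 0) :
    M.det = M 0 0 *
      (of fun i j : Fin n => M i.succ j.succ - M i.succ 0 / M 0 0 * M 0 j.succ).det := by
  set M' : Matrix (Fin (n + 1)) (Fin (n + 1)) K :=
    of fun i j => M i j + (Fin.cons 0 fun i => -(M i.succ 0 / M 0 0) : Fin (n + 1) → K) i * M 0 j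
  have hM' : M'.det = M.det :=
    det_eq_of_forall_row_eq_smul_add_const _ 0 rfl fun _ _ => rfl
  have hcol : ∀ i : Fin n, M' i.succ 0 = 0 := fun i => by
    simp only [of_apply, Fin.cons_succ, neg_mul, M']
    field_simp
    ring
  rw [← hM', det_succ_column_zero, Fin.sum_univ_succ]
  simp only [hcol, mul_zero, zero_mul, Finset.sum_const_zero, add_zero, Fin.val_zero, pow_zero,
    one_mul, Fin.succAbove_zero]
  congr 2
  · simp [M']
  · ext i j
    simp only [submatrix_apply, of_apply, Fin.cons_succ, neg_mul, M']
    ring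

def cauchy {ι : Type*} (a b : ι → K) : Matrix ι ι K :=
  of fun i j => (a i - b j)⁻¹

theorem cauchy_apply {ι : Type*} (a b : ι → K) (i j : ι) : cauchy a b i j = (a i - b j)⁻¹ :=
  rfl

theorem det_cauchy {n : ℕ} (a b : Fin n → K) (hab : ∀ i j, a i ≠ b j) :
    (cauchy a b).det =
      (∏ i, ∏ j ∈ Ioi i, (a j - a i) * (b i - b j)) / ∏ i, ∏ j, (a i - b j) := by
  induction n with
  | zero => simp
  | succ n ih =>
    have hab' : ∀ i j, a i - b j ≠ 0 := fun i j => sub_ne_zero.mpr (hab i j)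
    have hschur : (of fun i j : Fin n => cauchy a b i.succ j.succ -
          cauchy a b i.succ 0 / cauchy a b 0 0 * cauchy a b 0 j.succ) =
        of fun i j => (a i.succ - a 0) / (a i.succ - b 0) *
          of (fun i j => (b 0 - b j.succ) / (a 0 - b j.succ) *
            cauchy (fun i => a i.succ) (fun j => b j.succ) i j) i j := by
      ext i j
      simp only [of_apply, cauchy_apply]
      field_simp [hab' i.succ j.succ, hab' i.succ 0, hab' 0 0, hab' 0 j.succ]
      ring
    rw [det_succ_eq_mul_det_schur _ (inv_ne_zero (hab' 0 0)), hschur, det_mul_column,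
      det_mul_row, ih _ _ fun i j => hab i.succ j.succ]
    simp only [Fin.prod_univ_succ, Fin.prod_Ioi_zero, Fin.prod_Ioi_succ, prod_mul_distrib,
      prod_div_distrib, cauchy_apply]
    have hcol0 := prod_ne_zero_iff.mpr fun i (_ : i ∈ univ) => hab' (Fin.succ i) 0
    have hrow0 := prod_ne_zero_iff.mpr fun j (_ : j ∈ univ) => hab' 0 (Fin.succ j)
    have hrest := prod_ne_zero_iff.mpr fun i (_ : i ∈ univ) =>
      prod_ne_zero_iff.mpr fun j (_ : j ∈ univ) => hab' (Fin.succ i) (Fin.succ j)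
    field_simp [hcol0, hrow0, hrest]

theorem det_cauchy_ne_zero {n : ℕ} {a b : Fin n → K} (hab : ∀ i j, a i ≠ b j)
    (ha : Function.Injective a) (hb : Function.Injective b) : (cauchy a b).det ≠ 0 := by
  rw [det_cauchy a b hab]
  refine div_ne_zero (prod_ne_zero_iff.mpr fun i _ => prod_ne_zero_iff.mpr fun j hj => ?_)
    (prod_ne_zero_iff.mpr fun i _ => prod_ne_zero_iff.mpr fun j _ => sub_ne_zero.mpr (hab i j))
  have hij := (mem_Ioi.mp hj).ne
  exact mul_ne_zero (sub_ne_zero.mpr (ha.ne hij.symm)) (sub_ne_zero.mpr (hb.ne hij))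

theorem det_cauchyLike {n : ℕ} (a b : Fin (n + 1) → K) (c : K) (hab : ∀ i j, a i ≠ b j)
    (ha : Function.Injective a) (hb : Function.Injective b) (hb0 : ∀ j, b j ≠ 0)
    (hc : 1 + c ≠ 0) :
    (of fun i j => (c * a i + b j) / (a i - b j)).det =
      (1 + c) ^ n * (∏ j, b j + c * ∏ i, a i) * (cauchy a b).det := by
  have hab' : ∀ i j, a i - b j ≠ 0 := fun i j => sub_ne_zero.mpr (hab i j)
  set B : Matrix (Fin (n + 1)) (Fin (n + 1)) K := of fun i j => b j * cauchy a b i j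
  have hsplit : (of fun i j => (c * a i + b j) / (a i - b j)) =
      (1 + c) • (B + (c / (1 + c)) • vecMulVec 1 1) := by
    ext i j
    simp only [of_apply, smul_apply, add_apply, vecMulVec_apply, B, cauchy_apply, smul_eq_mul,
      Pi.one_apply]
    field_simp [hab' i j]
    ring
  have hshift : B + vecMulVec 1 1 = of fun i j => a i * cauchy a b i j := by
    ext i j
    simp only [of_apply, add_apply, vecMulVec_apply, B, cauchy_apply, Pi.one_apply]
    field_simp [hab' i j]
    ring
  have hB : IsUnit B.det := by
    rw [det_mul_row]
    exact (mul_ne_zero (prod_ne_zero_iff.mpr fun j _ => hb0 j)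
      (det_cauchy_ne_zero hab ha hb)).isUnit
  rw [hsplit, det_smul, det_add_smul_vecMulVec hB, hshift, det_mul_row, det_mul_column,
    Fintype.card_fin]
  field_simp
  ring

end Matrix

/-- Cauchy-type determinant identity: for distinct `ε_1,…,ε_n > 0`, `0 < ρ < 1`,
`0 < w < 1`, the matrix `U_{ij} = (−w²(1+ε_i) + ρ²/(1+ε_j))/((1+ε_i) − ρ²/(1+ε_j))`
satisfies `det U = (−1+w²)^{n−1} · U₁ · U₂ / ∏_{i,j}((1+ε_i) − ρ²/(1+ε_j))`, where
`U₁ = (−1)^{n+1} ∏_j (ρ²/(1+ε_j)) + (−1)^n w² ∏_i (1+ε_i)` and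
`U₂ = ∏_{i<j} ρ²(ε_i−ε_j)²/((1+ε_i)(1+ε_j))`. -/
theorem stmt_10 (n : ℕ) (hn : 1 ≤ n) (ρ w : ℝ) (hρ0 : 0 < ρ) (hρ1 : ρ < 1)
    (hw0 : 0 < w) (hw1 : w < 1) (ε : Fin n → ℝ) (hε : ∀ i, 0 < ε i)
    (hdist : Function.Injective ε) :
    (Matrix.of (fun i j : Fin n =>
        (-w ^ 2 * (1 + ε i) + ρ ^ 2 / (1 + ε j)) / ((1 + ε i) - ρ ^ 2 / (1 + ε j)))).det =
      (-1 + w ^ 2) ^ (n - 1) *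
        ((-1 : ℝ) ^ (n + 1) * ∏ j, ρ ^ 2 / (1 + ε j) +
          (-1 : ℝ) ^ n * w ^ 2 * ∏ i, (1 + ε i)) *
        (∏ i, ∏ j ∈ Finset.Ioi i, ρ ^ 2 * (ε i - ε j) ^ 2 / ((1 + ε i) * (1 + ε j))) /
        ∏ i, ∏ j, ((1 + ε i) - ρ ^ 2 / (1 + ε j)) := by
  obtain ⟨m, rfl⟩ := Nat.exists_eq_add_of_le' hn
  have ha0 : ∀ i, 0 < 1 + ε i := fun i => by linarith [hε i]
  set a : Fin (m + 1) → ℝ := fun i => 1 + ε i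
  set b : Fin (m + 1) → ℝ := fun j => ρ ^ 2 / (1 + ε j)
  have hb0 : ∀ j, 0 < b j := fun j => div_pos (by positivity) (ha0 j)
  have hab : ∀ i j, b j < a i := fun i j => calc
    b j < 1 := by rw [div_lt_one (ha0 j)]; nlinarith [hε j]
    _ < a i := by linarith [hε i]
  have hb : Function.Injective b := fun i j h => by
    rw [div_eq_div_iff (ha0 i).ne' (ha0 j).ne'] at h
    exact hdist (add_left_cancel (mul_left_cancel₀ (by positivity) h).symm)
  have hw : 1 + -w ^ 2 ≠ 0 := by nlinarith
  rw [det_cauchyLike a b (-w ^ 2) (fun i j => (hab i j).ne')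
    (fun i j h => hdist (add_left_cancel h)) hb (fun j => (hb0 j).ne') hw,
    det_cauchy a b fun i j => (hab i j).ne']
  have hgap : ∀ i j, (a j - a i) * (b i - b j) =
      ρ ^ 2 * (ε i - ε j) ^ 2 / ((1 + ε i) * (1 + ε j)) := fun i j => by
    simp only [a, b]
    field_simp [(ha0 i).ne', (ha0 j).ne']
    ring
  have hsign : ((-1 : ℝ) ^ m) ^ 2 = 1 := by rw [← pow_mul, pow_mul']; norm_num
  simp only [hgap, Nat.add_sub_cancel, mul_div_assoc]
  rw [show -1 + w ^ 2 = -1 * (1 + -w ^ 2) by ring, mul_pow]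
  congr 1
  linear_combination -(1 + -w ^ 2) ^ m * (∏ j, b j + -w ^ 2 * ∏ i, a i) * hsign
end

section
/- Let L > m > 0 and let S(z) be defined by S(z) = θ⁻¹(w(z)) where w(z) = θ(1)·((z−1)/(z−ρ²))ⁿ, θ(1) = (√L−√m)/(√L+√m), ρⁿ = θ(1), and θ⁻¹(y) = 8Lmy/((L−m)(L(y−1)² + m(y+1)²)). If K(z) is defined by the relation S(z) = 1/(1 + ((m+L)/2)·P(z)K(z)) with P(z) = 1/(z−1)ⁿ, then the resulting loop transfer function P(z)K(z) equals (K̃₁(z−ρ²)^{2n} + K̃₂(z−1)^{2n} − K̃₃(z−ρ²)ⁿ(z−1)ⁿ)/((z−ρ²)ⁿ(z−1)ⁿ), with K̃₁ = (√L+√m)²/(4Lm), K̃₂ = (√L−√m)²/(4Lm), K̃₃ = (L+m)/(2Lm). -/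
/-- With `θ(1) = (√L−√m)/(√L+√m)`, `ρⁿ = θ(1)`, `u = ((z−1)/(z−ρ²))ⁿ`,
`S(z) = θ⁻¹(θ(1)·u) = 8Lm θ(1) u/((L−m)(L(θ(1)u−1)² + m(θ(1)u+1)²))` and loop transfer
function `G(z) = (K̃₁(z−ρ²)^{2n} + K̃₂(z−1)^{2n} − K̃₃(z−ρ²)ⁿ(z−1)ⁿ)/((z−ρ²)ⁿ(z−1)ⁿ)`
(where `K̃₁ = (√L+√m)²/(4Lm)`, `K̃₂ = (√L−√m)²/(4Lm)`, `K̃₃ = (L+m)/(2Lm)`), the defining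
relation `S(z) = 1/(1 + ((m+L)/2)·G(z))` holds wherever the expressions are defined. -/
theorem stmt_17 (n : ℕ) (hn : 1 ≤ n) (L m ρ : ℝ) (hm : 0 < m) (hLm : m < L)
    (hρ0 : 0 < ρ)
    (hρ : ρ ^ n = (Real.sqrt L - Real.sqrt m) / (Real.sqrt L + Real.sqrt m))
    (z : ℝ) (hz1 : z ≠ 1) (hzρ : z ≠ ρ ^ 2)
    (t : ℝ) (ht : t = (Real.sqrt L - Real.sqrt m) / (Real.sqrt L + Real.sqrt m))
    (u : ℝ) (hu : u = ((z - 1) / (z - ρ ^ 2)) ^ n)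
    (hD : L * (t * u - 1) ^ 2 + m * (t * u + 1) ^ 2 ≠ 0) :
    8 * L * m * t * u / ((L - m) * (L * (t * u - 1) ^ 2 + m * (t * u + 1) ^ 2)) =
      1 / (1 + (m + L) / 2 *
        (((Real.sqrt L + Real.sqrt m) ^ 2 / (4 * L * m) * (z - ρ ^ 2) ^ (2 * n) +
            (Real.sqrt L - Real.sqrt m) ^ 2 / (4 * L * m) * (z - 1) ^ (2 * n) -
            (L + m) / (2 * L * m) * (z - ρ ^ 2) ^ n * (z - 1) ^ n) /
          ((z - ρ ^ 2) ^ n * (z - 1) ^ n))) := by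
  have hL : (0:ℝ) < L := hm.trans hLm
  set a := Real.sqrt L with haa
  set b := Real.sqrt m with hbb
  have ha2 : a ^ 2 = L := Real.sq_sqrt hL.le
  have hb2 : b ^ 2 = m := Real.sq_sqrt hm.le
  have hb0 : 0 < b := Real.sqrt_pos.mpr hm
  have hba : b < a := by
    have := Real.sqrt_lt_sqrt hm.le hLm
    simpa [haa, hbb] using this
  have ha0 : 0 < a := hb0.trans hba
  have habne : a + b ≠ 0 := by positivity
  have habne' : a - b ≠ 0 := sub_ne_zero.mpr hba.ne'
  have hX : z - ρ ^ 2 ≠ 0 := sub_ne_zero.mpr hzρ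
  have hY : z - 1 ≠ 0 := sub_ne_zero.mpr hz1
  have hXn : (z - ρ ^ 2) ^ n ≠ 0 := pow_ne_zero _ hX
  have hYn : (z - 1) ^ n ≠ 0 := pow_ne_zero _ hY
  have hu' : u = (z - 1) ^ n / (z - ρ ^ 2) ^ n := by rw [hu, div_pow]
  have hune : u ≠ 0 := by rw [hu']; exact div_ne_zero hYn hXn
  have htne : t ≠ 0 := by rw [ht]; exact div_ne_zero habne' habne
  have hp1 : (z - ρ ^ 2) ^ (2 * n) = ((z - ρ ^ 2) ^ n) ^ 2 := by rw [mul_comm, pow_mul]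
  have hp2 : (z - 1) ^ (2 * n) = ((z - 1) ^ n) ^ 2 := by rw [mul_comm, pow_mul]
  have key : 1 + (m + L) / 2 *
        (((a + b) ^ 2 / (4 * L * m) * (z - ρ ^ 2) ^ (2 * n) +
            (a - b) ^ 2 / (4 * L * m) * (z - 1) ^ (2 * n) -
            (L + m) / (2 * L * m) * (z - ρ ^ 2) ^ n * (z - 1) ^ n) /
          ((z - ρ ^ 2) ^ n * (z - 1) ^ n)) =
      ((L - m) * (L * (t * u - 1) ^ 2 + m * (t * u + 1) ^ 2)) / (8 * L * m * t * u) := by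
    rw [hp1, hp2, hu', ht, ← ha2, ← hb2]
    field_simp
    ring
  rw [key, one_div_div]
end
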